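/- arXiv:2505.02607 — 2 statements merged into one kernel-verified Lean document; each statement's English description precedes it below -/
import Mathlib

section
/- Expectiles are strictly increasing in their level: for X ∈ L² non-degenerate (not almost surely constant) and 0 < γ₁ < γ₂ < 1, one has e_{γ₁}(X) < e_{γ₂}(X). -/
/-!
Perturbing a minimizer `e` of `phi` to `e + t` and using the pointwise bound
`((a + h)⁺)² ≤ (a⁺)² + 2 h a⁺ + h²` (the derivative `2 a⁺` of `(a⁺)²` is 2-Lipschitz) gives
`0 ≤ 2 t c + t²` for all `t`, where `c = (1 - γ) E(e - X)⁺ - γ E(X - e)⁺`; hence `c = 0`.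
For non-degenerate `X` this first-order condition says `γ = E(e - X)⁺ / E|X - e|`, and this ratio
is monotone in `e`, so `e₂ ≤ e₁` would force `γ₂ ≤ γ₁`.
-/

open MeasureTheory ProbabilityTheory Real Set

/-- Asymmetric squared-loss objective whose minimizer is the `γ`-expectile. -/
noncomputable def phi {Ω : Type*} [MeasurableSpace Ω] (μ : Measure Ω) (γ : ℝ)
    (X : Ω → ℝ) (y : ℝ) : ℝ :=
  γ * ∫ ω, (max (X ω - y) 0) ^ 2 ∂μ + (1 - γ) * ∫ ω, (max (y - X ω) 0) ^ 2 ∂μ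

/-- `e` is the γ-expectile of `X` under `μ`: the unique minimizer of `phi`. -/
def IsExpectile {Ω : Type*} [MeasurableSpace Ω] (μ : Measure Ω) (γ : ℝ)
    (X : Ω → ℝ) (e : ℝ) : Prop :=
  (∀ y, phi μ γ X e ≤ phi μ γ X y) ∧ ∀ y, (∀ z, phi μ γ X y ≤ phi μ γ X z) → y = e

noncomputable def upperPartialMoment {Ω : Type*} [MeasurableSpace Ω] (μ : Measure Ω)
    (X : Ω → ℝ) (y : ℝ) : ℝ :=
  ∫ ω, max (X ω - y) 0 ∂μ

noncomputable def lowerPartialMoment {Ω : Type*} [MeasurableSpace Ω] (μ : Measure Ω)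
    (X : Ω → ℝ) (y : ℝ) : ℝ :=
  ∫ ω, max (y - X ω) 0 ∂μ

/-- The level `γ` at which `y` satisfies the first-order condition of a `γ`-expectile. -/
noncomputable def expectileLevel {Ω : Type*} [MeasurableSpace Ω] (μ : Measure Ω)
    (X : Ω → ℝ) (y : ℝ) : ℝ :=
  lowerPartialMoment μ X y / (upperPartialMoment μ X y + lowerPartialMoment μ X y)

lemma sq_max_add_le (a h : ℝ) :
    max (a + h) 0 ^ 2 ≤ max a 0 ^ 2 + 2 * h * max a 0 + h ^ 2 := by
  rcases le_total a 0 with ha | ha <;> rcases le_total (a + h) 0 with hah | hah <;>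
    simp only [max_eq_left, max_eq_right, ha, hah] <;> nlinarith

section PartialMoments

variable {Ω : Type*} [MeasurableSpace Ω] {μ : Measure Ω} [IsFiniteMeasure μ] {X : Ω → ℝ}

lemma integrable_max_sub_const_zero (hX : Integrable X μ) (y : ℝ) :
    Integrable (fun ω => max (X ω - y) 0) μ :=
  (hX.sub (integrable_const y)).pos_part

lemma integrable_max_const_sub_zero (hX : Integrable X μ) (y : ℝ) :
    Integrable (fun ω => max (y - X ω) 0) μ :=
  ((integrable_const y).sub hX).pos_part

lemma upperPartialMoment_add_lowerPartialMoment (hX : Integrable X μ)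
    (y : ℝ) :
    upperPartialMoment μ X y + lowerPartialMoment μ X y = ∫ ω, |X ω - y| ∂μ := by
  rw [upperPartialMoment, lowerPartialMoment, ← integral_add
    (integrable_max_sub_const_zero hX y) (integrable_max_const_sub_zero hX y)]
  congr with ω
  rw [← neg_sub (X ω) y, max_zero_add_max_neg_zero_eq_abs_self]

lemma upperPartialMoment_add_lowerPartialMoment_pos (hX : Integrable X μ)
    (hnd : ¬ ∃ c : ℝ, ∀ᵐ ω ∂μ, X ω = c) (y : ℝ) :
    0 < upperPartialMoment μ X y + lowerPartialMoment μ X y := by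
  rw [upperPartialMoment_add_lowerPartialMoment hX]
  refine (integral_nonneg fun ω => abs_nonneg _).lt_of_ne fun h => hnd ⟨y, ?_⟩
  have hzero := (integral_eq_zero_iff_of_nonneg (fun ω => abs_nonneg (X ω - y))
    (hX.sub (integrable_const y)).abs).1 h.symm
  filter_upwards [hzero] with ω hω
  exact sub_eq_zero.1 (abs_eq_zero.1 hω)

lemma upperPartialMoment_antitone (hX : Integrable X μ) :
    Antitone (upperPartialMoment μ X) := fun y y' hyy' =>
  integral_mono (integrable_max_sub_const_zero hX y') (integrable_max_sub_const_zero hX y)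
    fun ω => max_le_max (by linarith) le_rfl

lemma lowerPartialMoment_monotone (hX : Integrable X μ) :
    Monotone (lowerPartialMoment μ X) := fun y y' hyy' =>
  integral_mono (integrable_max_const_sub_zero hX y) (integrable_max_const_sub_zero hX y')
    fun ω => max_le_max (by linarith) le_rfl

lemma expectileLevel_monotone (hX : Integrable X μ)
    (hnd : ¬ ∃ c : ℝ, ∀ᵐ ω ∂μ, X ω = c) :
    Monotone (expectileLevel μ X) := by
  intro y y' hyy'
  have hU := upperPartialMoment_antitone hX hyy'
  have hL := lowerPartialMoment_monotone hX hyy'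
  have hU₀ : 0 ≤ upperPartialMoment μ X y' := integral_nonneg fun ω => le_max_right _ _
  have hL₀ : 0 ≤ lowerPartialMoment μ X y := integral_nonneg fun ω => le_max_right _ _
  rw [expectileLevel, expectileLevel, div_le_div_iff₀
    (upperPartialMoment_add_lowerPartialMoment_pos hX hnd y)
    (upperPartialMoment_add_lowerPartialMoment_pos hX hnd y')]
  nlinarith [mul_le_mul hL hU hU₀ (hL₀.trans hL)]

end PartialMoments

section FirstOrderCondition

variable {Ω : Type*} [MeasurableSpace Ω] {μ : Measure Ω} [IsProbabilityMeasure μ] {X : Ω → ℝ}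
  {γ : ℝ}

lemma integral_sq_max_add_le {f : Ω → ℝ} (hf : MemLp f 2 μ) (h : ℝ) :
    ∫ ω, max (f ω + h) 0 ^ 2 ∂μ ≤
      ∫ ω, max (f ω) 0 ^ 2 ∂μ + 2 * h * ∫ ω, max (f ω) 0 ∂μ + h ^ 2 := by
  have hsq : Integrable (fun ω => max (f ω) 0 ^ 2) μ := hf.pos_part.integrable_sq
  have hlin : Integrable (fun ω => 2 * h * max (f ω) 0) μ :=
    (hf.pos_part.integrable one_le_two).const_mul _
  have hsum : Integrable (fun ω => max (f ω) 0 ^ 2 + 2 * h * max (f ω) 0) μ := hsq.add hlin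
  calc ∫ ω, max (f ω + h) 0 ^ 2 ∂μ
      ≤ ∫ ω, (max (f ω) 0 ^ 2 + 2 * h * max (f ω) 0 + h ^ 2) ∂μ :=
        integral_mono (hf.add (memLp_const h)).pos_part.integrable_sq
          (hsum.add (integrable_const _)) fun ω => sq_max_add_le (f ω) h
    _ = _ := by
        rw [integral_add hsum (integrable_const _), integral_add hsq hlin,
          integral_const_mul, integral_const, probReal_univ, one_smul]

lemma phi_add_le (hX : MemLp X 2 μ) (hγ : γ ∈ Icc (0 : ℝ) 1) (y t : ℝ) :
    phi μ γ X (y + t) ≤ phi μ γ X y +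
      2 * t * ((1 - γ) * lowerPartialMoment μ X y - γ * upperPartialMoment μ X y) + t ^ 2 := by
  have hup := integral_sq_max_add_le (hX.sub (memLp_const y)) (-t)
  have hlow := integral_sq_max_add_le ((memLp_const y).sub hX) t
  simp only [Pi.sub_apply, sub_add_eq_add_sub, ← sub_eq_add_neg, sub_sub] at hup hlow
  rw [phi, phi, upperPartialMoment, lowerPartialMoment]
  linarith [mul_le_mul_of_nonneg_left hup hγ.1,
    mul_le_mul_of_nonneg_left hlow (sub_nonneg.2 hγ.2)]

lemma mul_upperPartialMoment_eq_of_forall_phi_le (hX : MemLp X 2 μ) (hγ : γ ∈ Icc (0 : ℝ) 1)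
    {e : ℝ} (hmin : ∀ y, phi μ γ X e ≤ phi μ γ X y) :
    γ * upperPartialMoment μ X e = (1 - γ) * lowerPartialMoment μ X e := by
  set c := (1 - γ) * lowerPartialMoment μ X e - γ * upperPartialMoment μ X e
  have hc : c ^ 2 ≤ 0 := by nlinarith [hmin (e + -c), phi_add_le hX hγ e (-c)]
  have : c = 0 := pow_eq_zero_iff two_ne_zero |>.1 (le_antisymm hc (sq_nonneg c))
  linarith

lemma IsExpectile.expectileLevel_eq (hX : MemLp X 2 μ)
    (hnd : ¬ ∃ c : ℝ, ∀ᵐ ω ∂μ, X ω = c) (hγ : γ ∈ Icc (0 : ℝ) 1) {e : ℝ}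
    (he : IsExpectile μ γ X e) :
    expectileLevel μ X e = γ := by
  have hfoc := mul_upperPartialMoment_eq_of_forall_phi_le hX hγ he.1
  rw [expectileLevel, div_eq_iff
    (upperPartialMoment_add_lowerPartialMoment_pos (hX.integrable one_le_two) hnd e).ne']
  linarith

end FirstOrderCondition

theorem expectile_strictMono_in_level
    {Ω : Type*} [MeasurableSpace Ω] (μ : Measure Ω) [IsProbabilityMeasure μ]
    (X : Ω → ℝ) (hX : MemLp X 2 μ)
    (hnd : ¬ ∃ c : ℝ, ∀ᵐ ω ∂μ, X ω = c)
    (γ₁ γ₂ : ℝ) (hγ₁ : γ₁ ∈ Set.Ioo (0:ℝ) 1) (hγ₂ : γ₂ ∈ Set.Ioo (0:ℝ) 1)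
    (h12 : γ₁ < γ₂)
    (e₁ e₂ : ℝ) (he₁ : IsExpectile μ γ₁ X e₁) (he₂ : IsExpectile μ γ₂ X e₂) :
    e₁ < e₂ := by
  by_contra! h
  have hlevel := expectileLevel_monotone (hX.integrable one_le_two) hnd h
  rw [he₁.expectileLevel_eq hX hnd (Ioo_subset_Icc_self hγ₁),
    he₂.expectileLevel_eq hX hnd (Ioo_subset_Icc_self hγ₂)] at hlevel
  linarith
end

section
/- Subadditivity of expectiles for γ ≥ 1/2: for X, Y ∈ L² and γ ∈ [1/2, 1), one has e_γ(X + Y) ≤ e_γ(X) + e_γ(Y); for γ ∈ (0, 1/2] the reverse inequality e_γ(X + Y) ≥ e_γ(X) + e_γ(Y) holds. -/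
/-!
Write `ψ(u) = γ u⁺ - (1 - γ) u⁻`, half the derivative of the loss `γ (u⁺)² + (1 - γ) (u⁻)²`
defining `phi`. The loss is smooth with `2`-Lipschitz derivative, so a minimizer `e` of `phi`
satisfies the first-order condition `E[ψ(Z - e)] = 0`; and `ψ` is strongly increasing, so
`y ↦ E[ψ(Z - y)]` is strictly decreasing and the expectile is its unique zero.
Since `ψ(u) = γ u + (2γ - 1) u⁻` and `u ↦ u⁻` is subadditive, `ψ` is subadditive for `γ ≥ 1/2`,
whence `E[ψ(X + Y - e_X - e_Y)] ≤ E[ψ(X - e_X)] + E[ψ(Y - e_Y)] = 0 = E[ψ(X + Y - e_{X+Y})]`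
and `e_{X+Y} ≤ e_X + e_Y`; for `γ ≤ 1/2`, `ψ` is superadditive and every inequality reverses.
-/

open MeasureTheory ProbabilityTheory Real Set

lemma max_neg_add_le {α : Type*} [AddCommGroup α] [LinearOrder α] [IsOrderedAddMonoid α]
    (a b : α) : max (-(a + b)) 0 ≤ max (-a) 0 + max (-b) 0 := by
  rw [neg_add]
  simpa only [add_zero] using
    max_add_add_le_max_add_max (a := -a) (b := -b) (c := (0 : α)) (d := 0)

def expectileLoss (γ u : ℝ) : ℝ :=
  γ * max u 0 ^ 2 + (1 - γ) * max (-u) 0 ^ 2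

def expectileIdentFn (γ u : ℝ) : ℝ :=
  γ * max u 0 - (1 - γ) * max (-u) 0

lemma expectileIdentFn_eq (γ u : ℝ) :
    expectileIdentFn γ u = γ * u + (2 * γ - 1) * max (-u) 0 := by
  rcases le_total u 0 with h | h
  · rw [expectileIdentFn, max_eq_right h, max_eq_left (neg_nonneg.2 h)]; ring
  · rw [expectileIdentFn, max_eq_left h, max_eq_right (neg_nonpos.2 h)]; ring

lemma expectileIdentFn_add_le_add {γ : ℝ} (hγ : 1 / 2 ≤ γ) (a b : ℝ) :
    expectileIdentFn γ (a + b) ≤ expectileIdentFn γ a + expectileIdentFn γ b := by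
  simp only [expectileIdentFn_eq]
  nlinarith [mul_le_mul_of_nonneg_left (max_neg_add_le a b) (by linarith : 0 ≤ 2 * γ - 1)]

lemma add_le_expectileIdentFn_add {γ : ℝ} (hγ : γ ≤ 1 / 2) (a b : ℝ) :
    expectileIdentFn γ a + expectileIdentFn γ b ≤ expectileIdentFn γ (a + b) := by
  simp only [expectileIdentFn_eq]
  nlinarith [mul_le_mul_of_nonneg_left (max_neg_add_le a b) (by linarith : 0 ≤ 1 - 2 * γ)]

lemma min_mul_sub_le_expectileIdentFn_sub (γ : ℝ) {u v : ℝ} (h : v ≤ u) :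
    min γ (1 - γ) * (u - v) ≤ expectileIdentFn γ u - expectileIdentFn γ v := by
  have hmin_le := min_le_left γ (1 - γ)
  have hmin_le' := min_le_right γ (1 - γ)
  rcases le_total v 0 with hv | hv <;> rcases le_total u 0 with hu | hu <;>
    simp only [expectileIdentFn, max_eq_left, max_eq_right, hu, hv, neg_nonneg, neg_nonpos] <;>
    nlinarith

lemma expectileLoss_sub_le {γ : ℝ} (hγ0 : 0 ≤ γ) (hγ1 : γ ≤ 1) (u t : ℝ) :
    expectileLoss γ (u - t) ≤ expectileLoss γ u - 2 * t * expectileIdentFn γ u + t ^ 2 := by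
  rcases le_total u 0 with hu | hu <;> rcases le_total (u - t) 0 with hut | hut <;>
    simp only [expectileLoss, expectileIdentFn, max_eq_left, max_eq_right, hu, hut, neg_nonneg,
      neg_nonpos]
  · nlinarith [mul_nonneg hγ0 (sq_nonneg t)]
  · nlinarith [mul_nonneg (mul_nonneg hγ0 (neg_nonneg.2 hu)) (by linarith : 0 ≤ u - 2 * t)]
  · nlinarith [mul_nonneg (mul_nonneg (sub_nonneg.2 hγ1) hu) (by linarith : 0 ≤ 2 * t - u)]
  · nlinarith [mul_nonneg (sub_nonneg.2 hγ1) (sq_nonneg t)]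

section Integral

variable {Ω : Type*} [MeasurableSpace Ω] {μ : Measure Ω} {Z : Ω → ℝ}

lemma integrable_expectileIdentFn [IsFiniteMeasure μ] (hZ : Integrable Z μ) (γ y : ℝ) :
    Integrable (fun ω => expectileIdentFn γ (Z ω - y)) μ :=
  have h := hZ.sub (integrable_const y)
  (h.pos_part.const_mul γ).sub (h.neg_part.const_mul (1 - γ))

lemma integrable_expectileLoss [IsFiniteMeasure μ] (hZ : MemLp Z 2 μ) (γ y : ℝ) :
    Integrable (fun ω => expectileLoss γ (Z ω - y)) μ :=
  have h := hZ.sub (memLp_const y)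
  (h.pos_part.integrable_sq.const_mul γ).add (h.neg_part.integrable_sq.const_mul (1 - γ))

lemma phi_eq_integral_expectileLoss [IsFiniteMeasure μ] (hZ : MemLp Z 2 μ) (γ y : ℝ) :
    phi μ γ Z y = ∫ ω, expectileLoss γ (Z ω - y) ∂μ := by
  have hpos : Integrable (fun ω => γ * max (Z ω - y) 0 ^ 2) μ :=
    (hZ.sub (memLp_const y)).pos_part.integrable_sq.const_mul γ
  have hneg : Integrable (fun ω => (1 - γ) * max (y - Z ω) 0 ^ 2) μ :=
    ((memLp_const y).sub hZ).pos_part.integrable_sq.const_mul (1 - γ)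
  rw [phi, ← integral_const_mul, ← integral_const_mul, ← integral_add hpos hneg]
  simp only [expectileLoss, neg_sub]

lemma phi_add_le_s9 [IsProbabilityMeasure μ] {γ : ℝ} (hγ0 : 0 ≤ γ) (hγ1 : γ ≤ 1)
    (hZ : MemLp Z 2 μ) (y t : ℝ) :
    phi μ γ Z (y + t) ≤ phi μ γ Z y - 2 * t * ∫ ω, expectileIdentFn γ (Z ω - y) ∂μ + t ^ 2 := by
  have hL := integrable_expectileLoss hZ γ y
  have hI := (integrable_expectileIdentFn (hZ.integrable one_le_two) γ y).const_mul (2 * t)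
  have hLI : Integrable
      (fun ω => expectileLoss γ (Z ω - y) - 2 * t * expectileIdentFn γ (Z ω - y)) μ :=
    hL.sub hI
  rw [phi_eq_integral_expectileLoss hZ, phi_eq_integral_expectileLoss hZ]
  calc ∫ ω, expectileLoss γ (Z ω - (y + t)) ∂μ
      ≤ ∫ ω, (expectileLoss γ (Z ω - y) - 2 * t * expectileIdentFn γ (Z ω - y) + t ^ 2) ∂μ :=
        integral_mono (integrable_expectileLoss hZ γ _) (hLI.add (integrable_const _))
          fun ω => by
            simpa only [sub_add_eq_sub_sub] using expectileLoss_sub_le hγ0 hγ1 (Z ω - y) t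
    _ = _ := by
        rw [integral_add hLI (integrable_const _), integral_sub hL hI, integral_const_mul,
          integral_const, probReal_univ, one_smul]

lemma integral_expectileIdentFn_eq_zero [IsProbabilityMeasure μ] {γ : ℝ} (hγ0 : 0 ≤ γ)
    (hγ1 : γ ≤ 1) (hZ : MemLp Z 2 μ) {e : ℝ} (he : ∀ y, phi μ γ Z e ≤ phi μ γ Z y) :
    ∫ ω, expectileIdentFn γ (Z ω - e) ∂μ = 0 := by
  set G := ∫ ω, expectileIdentFn γ (Z ω - e) ∂μ
  -- otherwise the step `t = G` would lower `phi` by `G ^ 2`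
  have hdescent := (he (e + G)).trans (phi_add_le_s9 hγ0 hγ1 hZ e G)
  nlinarith

lemma strictAnti_integral_expectileIdentFn [IsProbabilityMeasure μ] {γ : ℝ} (hγ0 : 0 < γ)
    (hγ1 : γ < 1) (hZ : Integrable Z μ) :
    StrictAnti fun y => ∫ ω, expectileIdentFn γ (Z ω - y) ∂μ := by
  intro y y' hyy'
  have hI := integrable_expectileIdentFn hZ γ
  have gap : ∫ ω, (expectileIdentFn γ (Z ω - y') + min γ (1 - γ) * (y' - y)) ∂μ
      ≤ ∫ ω, expectileIdentFn γ (Z ω - y) ∂μ :=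
    integral_mono ((hI y').add (integrable_const _)) (hI y) fun ω => by
      have hψ := min_mul_sub_le_expectileIdentFn_sub γ (sub_le_sub_left hyy'.le (Z ω))
      rw [sub_sub_sub_cancel_left] at hψ
      linarith
  rw [integral_add (hI y') (integrable_const _), integral_const, probReal_univ, one_smul] at gap
  have hgap_pos := mul_pos (lt_min hγ0 (sub_pos.2 hγ1)) (sub_pos.2 hyy')
  dsimp only
  linarith

variable [IsFiniteMeasure μ] {γ : ℝ} {X Y : Ω → ℝ}

lemma integral_expectileIdentFn_add_sub_le (hγ : 1 / 2 ≤ γ) (hX : Integrable X μ)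
    (hY : Integrable Y μ) (a b : ℝ) :
    ∫ ω, expectileIdentFn γ (X ω + Y ω - (a + b)) ∂μ
      ≤ ∫ ω, expectileIdentFn γ (X ω - a) ∂μ + ∫ ω, expectileIdentFn γ (Y ω - b) ∂μ := by
  have hXa := integrable_expectileIdentFn hX γ a
  have hYb := integrable_expectileIdentFn hY γ b
  rw [← integral_add hXa hYb]
  refine integral_mono (integrable_expectileIdentFn (hX.add hY) γ _) (hXa.add hYb) fun ω => ?_
  simpa only [add_sub_add_comm] using expectileIdentFn_add_le_add hγ (X ω - a) (Y ω - b)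

lemma le_integral_expectileIdentFn_add_sub (hγ : γ ≤ 1 / 2) (hX : Integrable X μ)
    (hY : Integrable Y μ) (a b : ℝ) :
    ∫ ω, expectileIdentFn γ (X ω - a) ∂μ + ∫ ω, expectileIdentFn γ (Y ω - b) ∂μ
      ≤ ∫ ω, expectileIdentFn γ (X ω + Y ω - (a + b)) ∂μ := by
  have hXa := integrable_expectileIdentFn hX γ a
  have hYb := integrable_expectileIdentFn hY γ b
  rw [← integral_add hXa hYb]
  refine integral_mono (hXa.add hYb) (integrable_expectileIdentFn (hX.add hY) γ _) fun ω => ?_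
  simpa only [add_sub_add_comm] using add_le_expectileIdentFn_add hγ (X ω - a) (Y ω - b)

end Integral

theorem expectile_subadditive_superadditive
    {Ω : Type*} [MeasurableSpace Ω] (μ : Measure Ω) [IsProbabilityMeasure μ]
    (X Y : Ω → ℝ) (hX : MemLp X 2 μ) (hY : MemLp Y 2 μ)
    (γ : ℝ) (hγ : γ ∈ Set.Ioo (0:ℝ) 1)
    (eX eY eXY : ℝ) (heX : IsExpectile μ γ X eX) (heY : IsExpectile μ γ Y eY)
    (heXY : IsExpectile μ γ (fun ω => X ω + Y ω) eXY) :
    (1/2 ≤ γ → eXY ≤ eX + eY) ∧ (γ ≤ 1/2 → eX + eY ≤ eXY) := by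
  obtain ⟨hγ0, hγ1⟩ := hγ
  have hXY : MemLp (fun ω => X ω + Y ω) 2 μ := hX.add hY
  have hanti := strictAnti_integral_expectileIdentFn hγ0 hγ1 (hXY.integrable one_le_two)
  have hfoc {Z : Ω → ℝ} {e : ℝ} (hZ : MemLp Z 2 μ) (he : IsExpectile μ γ Z e) :=
    integral_expectileIdentFn_eq_zero hγ0.le hγ1.le hZ he.1
  have hX1 := hX.integrable one_le_two
  have hY1 := hY.integrable one_le_two
  refine ⟨fun hγ' => hanti.le_iff_ge.1 ?_, fun hγ' => hanti.le_iff_ge.1 ?_⟩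
  · calc _ ≤ _ := integral_expectileIdentFn_add_sub_le hγ' hX1 hY1 eX eY
      _ = _ := by rw [hfoc hX heX, hfoc hY heY, hfoc hXY heXY, add_zero]
  · calc _ = _ := by rw [hfoc hXY heXY, hfoc hX heX, hfoc hY heY, add_zero]
      _ ≤ _ := le_integral_expectileIdentFn_add_sub hγ' hX1 hY1 eX eY
end
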